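/- In the crossed module extension setting, for sections s : Z → S of π and q : Im(∂) → V of ∂, the element θ(x,y,z) := x▹(g(y,z)+g(z,y)) − g(x·y, z) + g(x, y·z + z·y) − g(x,y)◃z, where g(x,y) = q(s(x)·s(y) − s(x·y)), satisfies ∂(θ(x,y,z)) = 0; i.e., θ takes values in M = ker(∂). -/

import Mathlib

/-!
Put `f(x,y) = s(x)·s(y) − s(x·y)`. Since `π ∘ s = id` and `π` is multiplicative, `f` lands in
`ker π = Im ∂`, so `∂ ∘ q` fixes it and `∂ g = f`. As `∂` intertwines the actions with the
multiplication of `S`, `∂ θ` is the same expression with `g` replaced by `f`, and that expression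
vanishes by the Zinbiel identities of `S` and `Z`.
-/

/-- The 2-cochain `g(x,y) = q(s(x)·s(y) − s(x·y))` built from sections `s`, `q`. -/
def gsec {K Z S V : Type*} [Field K]
    [AddCommGroup Z] [Module K Z] [AddCommGroup S] [Module K S]
    [AddCommGroup V] [Module K V]
    (mZ : Z →ₗ[K] Z →ₗ[K] Z) (mS : S →ₗ[K] S →ₗ[K] S)
    (s : Z →ₗ[K] S) (q : S →ₗ[K] V) (x y : Z) : V :=
  q (mS (s x) (s y) - s (mZ x y))

section MulDefect

variable {K Z S : Type*} [CommRing K] [AddCommGroup Z] [Module K Z] [AddCommGroup S] [Module K S]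
  (mZ : Z →ₗ[K] Z →ₗ[K] Z) (mS : S →ₗ[K] S →ₗ[K] S) (s : Z →ₗ[K] S)

def mulDefect (x y : Z) : S :=
  mS (s x) (s y) - s (mZ x y)

theorem mulDefect_zinbiel_cocycle
    (hzZ : ∀ x y z : Z, mZ (mZ x y) z = mZ x (mZ y z) + mZ x (mZ z y))
    (hzS : ∀ x y z : S, mS (mS x y) z = mS x (mS y z) + mS x (mS z y)) (x y z : Z) :
    mS (s x) (mulDefect mZ mS s y z + mulDefect mZ mS s z y)
      - mulDefect mZ mS s (mZ x y) z
      + mulDefect mZ mS s x (mZ y z + mZ z y)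
      - mS (mulDefect mZ mS s x y) (s z) = 0 := by
  simp only [mulDefect, map_add, map_sub, LinearMap.sub_apply, hzS, hzZ]
  abel

theorem map_mulDefect_eq_zero (π : S →ₗ[K] Z) (hπ : ∀ x y : S, π (mS x y) = mZ (π x) (π y))
    (hs : ∀ x : Z, π (s x) = x) (x y : Z) : π (mulDefect mZ mS s x y) = 0 := by
  simp [mulDefect, hπ, hs]

end MulDefect

theorem map_gsec_eq_mulDefect {K Z S V : Type*} [Field K]
    [AddCommGroup Z] [Module K Z] [AddCommGroup S] [Module K S] [AddCommGroup V] [Module K V]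
    {mZ : Z →ₗ[K] Z →ₗ[K] Z} {mS : S →ₗ[K] S →ₗ[K] S} {δ : V →ₗ[K] S} {π : S →ₗ[K] Z}
    (hπ : ∀ x y : S, π (mS x y) = mZ (π x) (π y))
    (hker : ∀ u : S, π u = 0 ↔ u ∈ LinearMap.range δ)
    {s : Z →ₗ[K] S} (hs : ∀ x : Z, π (s x) = x)
    {q : S →ₗ[K] V} (hq : ∀ v : V, δ (q (δ v)) = δ v) (x y : Z) :
    δ (gsec mZ mS s q x y) = mulDefect mZ mS s x y := by
  obtain ⟨v, hv⟩ := (hker _).mp (map_mulDefect_eq_zero mZ mS s π hπ hs x y)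
  rw [gsec, ← mulDefect, ← hv, hq]

theorem crossed_module_extension_cocycle_in_kernel_general {K Z S V : Type*} [Field K]
    [AddCommGroup Z] [Module K Z] [AddCommGroup S] [Module K S]
    [AddCommGroup V] [Module K V]
    (mZ : Z →ₗ[K] Z →ₗ[K] Z) (mS : S →ₗ[K] S →ₗ[K] S)
    (hzZ : ∀ x y z : Z, mZ (mZ x y) z = mZ x (mZ y z) + mZ x (mZ z y))
    (hzS : ∀ x y z : S, mS (mS x y) z = mS x (mS y z) + mS x (mS z y))
    -- the crossed module `δ : V → S` with actions `r = ▹`, `l = ◃` of `S` on `V`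
    (δ : V →ₗ[K] S)
    (r : S →ₗ[K] V →ₗ[K] V) (l : V →ₗ[K] S →ₗ[K] V)
    (hc1 : ∀ (x : S) (v : V), δ (r x v) = mS x (δ v))
    (hc2 : ∀ (x : S) (v : V), δ (l v x) = mS (δ v) x)
    -- `π : S → Z` is a surjective Zinbiel homomorphism with `ker π = Im δ`
    (π : S →ₗ[K] Z)
    (hπ : ∀ x y : S, π (mS x y) = mZ (π x) (π y))
    (hker : ∀ u : S, π u = 0 ↔ u ∈ LinearMap.range δ)
    -- sections: `π ∘ s = id` and `δ ∘ q = id` on the image of `δ`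
    (s : Z →ₗ[K] S) (hs : ∀ x : Z, π (s x) = x)
    (q : S →ₗ[K] V) (hq : ∀ v : V, δ (q (δ v)) = δ v) :
    ∀ x y z : Z,
      δ (r (s x) (gsec mZ mS s q y z + gsec mZ mS s q z y)
          - gsec mZ mS s q (mZ x y) z
          + gsec mZ mS s q x (mZ y z + mZ z y)
          - l (gsec mZ mS s q x y) (s z)) = 0 := by
  intro x y z
  simp only [map_add, map_sub, hc1, hc2, map_gsec_eq_mulDefect hπ hker hs hq]
  simpa only [map_add] using mulDefect_zinbiel_cocycle mZ mS s hzZ hzS x y z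

/-- In a crossed module extension `0 → M → V →δ S →π Z → 0` of Zinbiel algebras, for
sections `s` of `π` and `q` of `δ` (on the image of `δ`), the cochain
`θ(x,y,z) = x▹(g(y,z)+g(z,y)) − g(x·y,z) + g(x, y·z+z·y) − g(x,y)◃z`
(with `x▹v := s(x)▹v`, `v◃x := v◃s(x)`) satisfies `δ(θ(x,y,z)) = 0`, i.e. `θ` takes
values in `M = ker δ`. -/
theorem crossed_module_extension_cocycle_in_kernel {K Z S V : Type*} [Field K]
    [AddCommGroup Z] [Module K Z] [AddCommGroup S] [Module K S]
    [AddCommGroup V] [Module K V]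
    (mZ : Z →ₗ[K] Z →ₗ[K] Z) (mS : S →ₗ[K] S →ₗ[K] S) (mV : V →ₗ[K] V →ₗ[K] V)
    (hzZ : ∀ x y z : Z, mZ (mZ x y) z = mZ x (mZ y z) + mZ x (mZ z y))
    (hzS : ∀ x y z : S, mS (mS x y) z = mS x (mS y z) + mS x (mS z y))
    (hzV : ∀ x y z : V, mV (mV x y) z = mV x (mV y z) + mV x (mV z y))
    -- the crossed module `δ : V → S` with actions `r = ▹`, `l = ◃` of `S` on `V`
    (δ : V →ₗ[K] S)
    (hδ : ∀ v w : V, δ (mV v w) = mS (δ v) (δ w))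
    (r : S →ₗ[K] V →ₗ[K] V) (l : V →ₗ[K] S →ₗ[K] V)
    (hb1 : ∀ (x y : S) (v : V), r (mS x y) v = r x (r y v + l v y))
    (hb2 : ∀ (x y : S) (v : V), l (l v x) y = l v (mS x y + mS y x))
    (hb3 : ∀ (x y : S) (v : V), l (r x v) y = r x (l v y + r y v))
    (hc1 : ∀ (x : S) (v : V), δ (r x v) = mS x (δ v))
    (hc2 : ∀ (x : S) (v : V), δ (l v x) = mS (δ v) x)
    (hc3 : ∀ v w : V, r (δ v) w = mV v w)
    (hc4 : ∀ v w : V, mV v w = l v (δ w))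
    -- `π : S → Z` is a surjective Zinbiel homomorphism with `ker π = Im δ`
    (π : S →ₗ[K] Z)
    (hπ : ∀ x y : S, π (mS x y) = mZ (π x) (π y))
    (hsurj : Function.Surjective π)
    (hker : ∀ u : S, π u = 0 ↔ u ∈ LinearMap.range δ)
    -- sections: `π ∘ s = id` and `δ ∘ q = id` on the image of `δ`
    (s : Z →ₗ[K] S) (hs : ∀ x : Z, π (s x) = x)
    (q : S →ₗ[K] V) (hq : ∀ v : V, δ (q (δ v)) = δ v) :
    ∀ x y z : Z,
      δ (r (s x) (gsec mZ mS s q y z + gsec mZ mS s q z y)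
          - gsec mZ mS s q (mZ x y) z
          + gsec mZ mS s q x (mZ y z + mZ z y)
          - l (gsec mZ mS s q x y) (s z)) = 0 :=
  crossed_module_extension_cocycle_in_kernel_general mZ mS hzZ hzS δ r l hc1 hc2 π hπ hker s hs q hq
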